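/- arXiv:1708.03695 — 3 statements merged into one kernel-verified Lean document; each statement's English description precedes it below -/
import Mathlib

section
/- Let ℓ(x) = u(x) · |log|x - c||^α for a C¹ function u with u(c) > 0 and α > 0, defined for x near c (x ≠ c). Then lim_{x → c} (log |Dℓ(x)|) / (ℓ(x) · log(1/|x - c|)) = 0. -/
open Real Filter Topology

/-!
Let `L(x) = -log |x - c|`, which tends to `+∞`. Near `c` we have `ℓ = u L^α`, and differentiating
gives `(x - c) ℓ'(x) = L^(α-1) g(x)` with `g = u' · (x - c) L - α u → -α u(c) ≠ 0`, because
`(x - c) log |x - c| → 0`. Hence `log |ℓ'| = L + (α - 1) log L + log |g| ~ L`, so the quotient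
equals `(log |ℓ'| / L) / ℓ → 1 / ∞ = 0`.
-/

theorem tendsto_neg_log_abs_sub_nhdsNE (c : ℝ) :
    Tendsto (fun x => -log |x - c|) (𝓝[≠] c) atTop := by
  have hsub : Tendsto (fun x => x - c) (𝓝[≠] c) (𝓝[≠] 0) :=
    tendsto_nhdsWithin_of_tendsto_nhds_of_eventually_within _
      (((continuous_sub_right c).tendsto' c 0 (sub_self c)).mono_left nhdsWithin_le_nhds)
      (eventually_nhdsWithin_of_forall fun _ hx => sub_ne_zero.mpr hx)
  simpa only [log_abs, Function.comp_def] using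
    tendsto_neg_atBot_atTop.comp (tendsto_log_nhdsNE_zero.comp hsub)

theorem tendsto_sub_mul_neg_log_abs_sub (c : ℝ) :
    Tendsto (fun x => (x - c) * -log |x - c|) (𝓝 c) (𝓝 0) := by
  simpa [log_abs] using ((continuous_mul_log.comp (continuous_sub_right c)).tendsto c).neg

theorem hasDerivAt_mul_rpow_neg_log_abs_sub {u : ℝ → ℝ} {u' c x : ℝ} (α : ℝ)
    (hu : HasDerivAt u u' x) (hx : x ≠ c) (hL : 0 < -log |x - c|) :
    HasDerivAt (fun y => u y * (-log |y - c|) ^ α)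
      ((-log |x - c|) ^ (α - 1) / (x - c) * (u' * ((x - c) * -log |x - c|) - α * u x)) x := by
  have hlog : HasDerivAt (fun y => -log |y - c|) (-(x - c)⁻¹) x := by
    simpa [log_abs, Pi.neg_def] using
      (((hasDerivAt_id x).sub_const c).log (sub_ne_zero.mpr hx)).neg
  refine (hu.mul (hlog.rpow_const (Or.inl hL.ne'))).congr_deriv ?_
  rw [rpow_sub_one hL.ne']
  generalize -log |x - c| = L at hL ⊢
  field_simp [sub_ne_zero.mpr hx]
  ring

theorem tendsto_mul_log_add_add_div_self {ι : Type*} {l : Filter ι} {L h : ι → ℝ} {b : ℝ}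
    (β : ℝ) (hL : Tendsto L l atTop) (hh : Tendsto h l (𝓝 b)) :
    Tendsto (fun i => (β * log (L i) + L i + h i) / L i) l (𝓝 1) := by
  have hlog : Tendsto (fun i => log (L i) / L i) l (𝓝 0) :=
    isLittleO_log_id_atTop.tendsto_div_nhds_zero.comp hL
  have key := ((hlog.const_mul β).add_const 1).add (hh.div_atTop hL)
  rw [mul_zero, zero_add, add_zero] at key
  refine key.congr' ?_
  filter_upwards [hL.eventually_ne_atTop 0] with i hi
  field_simp

section

variable {c α : ℝ} {u ℓ : ℝ → ℝ}

theorem eventually_eventuallyEq_mul_rpow_neg_log_abs_sub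
    (hℓ : ∀ x ≠ c, ℓ x = u x * abs (log |x - c|) ^ α) :
    ∀ᶠ x in 𝓝[≠] c, 0 < -log |x - c| ∧ ℓ =ᶠ[𝓝 x] fun y => u y * (-log |y - c|) ^ α := by
  have hpos : ∀ y ≠ c, y ∈ Metric.ball c 1 → 0 < -log |y - c| := fun y hy hy1 =>
    neg_pos.mpr <| log_neg (abs_pos.mpr (sub_ne_zero.mpr hy)) <| by
      rwa [Metric.mem_ball, dist_eq] at hy1
  filter_upwards [self_mem_nhdsWithin, nhdsWithin_le_nhds (Metric.ball_mem_nhds c one_pos)]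
    with x hx hx1
  refine ⟨hpos x hx hx1, ?_⟩
  filter_upwards [(isOpen_compl_singleton.inter Metric.isOpen_ball).mem_nhds ⟨hx, hx1⟩]
    with y ⟨hy, hy1⟩
  rw [hℓ y hy, abs_of_neg (neg_pos.mp (hpos y hy hy1))]

theorem tendsto_log_abs_deriv_div_neg_log_abs_sub (hu : ContDiff ℝ 1 u) (huc : u c ≠ 0)
    (hα : α ≠ 0) (hℓ : ∀ x ≠ c, ℓ x = u x * abs (log |x - c|) ^ α) :
    Tendsto (fun x => log |deriv ℓ x| / -log |x - c|) (𝓝[≠] c) (𝓝 1) := by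
  set g := fun x => deriv u x * ((x - c) * -log |x - c|) - α * u x
  have hg : Tendsto g (𝓝[≠] c) (𝓝 (-(α * u c))) := by
    have := (((hu.continuous_deriv le_rfl).tendsto c).mul (tendsto_sub_mul_neg_log_abs_sub c)).sub
      ((hu.continuous.tendsto c).const_mul α)
    simpa [g, log_abs] using this.mono_left nhdsWithin_le_nhds
  have hg0 : -(α * u c) ≠ 0 := by simp [hα, huc]
  refine (tendsto_mul_log_add_add_div_self (α - 1) (tendsto_neg_log_abs_sub_nhdsNE c)
    (hg.log hg0)).congr' ?_
  filter_upwards [eventually_eventuallyEq_mul_rpow_neg_log_abs_sub hℓ, hg.eventually_ne hg0,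
    self_mem_nhdsWithin] with x ⟨hL, hℓx⟩ hgx hx
  have hderiv : deriv ℓ x = (-log |x - c|) ^ (α - 1) / (x - c) * g x := by
    rw [hℓx.deriv_eq]
    exact (hasDerivAt_mul_rpow_neg_log_abs_sub α
      (hu.differentiable one_ne_zero x).hasDerivAt hx hL).deriv
  have hLα : 0 < (-log |x - c|) ^ (α - 1) := rpow_pos_of_pos hL _
  have hxc : 0 < |x - c| := abs_pos.mpr (sub_ne_zero.mpr hx)
  rw [hderiv, abs_mul, abs_div, abs_of_pos hLα,
    log_mul (div_pos hLα hxc).ne' (abs_ne_zero.mpr hgx), log_div hLα.ne' hxc.ne', log_rpow hL,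
    log_abs (g x)]
  ring

theorem tendsto_atTop_of_eq_mul_abs_log_abs_sub_rpow (hu : Continuous u) (huc : 0 < u c)
    (hα : 0 < α) (hℓ : ∀ x ≠ c, ℓ x = u x * abs (log |x - c|) ^ α) :
    Tendsto ℓ (𝓝[≠] c) atTop := by
  refine (((hu.tendsto c).mono_left nhdsWithin_le_nhds).pos_mul_atTop huc
    ((tendsto_rpow_atTop hα).comp (tendsto_neg_log_abs_sub_nhdsNE c))).congr' ?_
  filter_upwards [eventually_eventuallyEq_mul_rpow_neg_log_abs_sub hℓ] with x ⟨_, hℓx⟩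
  exact hℓx.eq_of_nhds.symm

end

/-- Logarithmic order flat critical point: `log |Dℓ(x)| / (ℓ(x) log(1/|x-c|)) → 0` as `x → c`. -/
theorem stmt1 (c : ℝ) (u : ℝ → ℝ) (hu : ContDiff ℝ 1 u) (huc : 0 < u c)
    (α : ℝ) (hα : 0 < α)
    (ℓ : ℝ → ℝ) (hℓ : ∀ x ≠ c, ℓ x = u x * abs (Real.log (abs (x - c))) ^ α) :
    Tendsto (fun x => Real.log |deriv ℓ x| / (ℓ x * Real.log (1 / |x - c|)))
      (nhdsWithin c {c}ᶜ) (nhds 0) := by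
  refine ((tendsto_log_abs_deriv_div_neg_log_abs_sub hu huc.ne' hα.ne' hℓ).div_atTop
    (tendsto_atTop_of_eq_mul_abs_log_abs_sub_rpow hu.continuous huc hα hℓ)).congr fun x => ?_
  rw [one_div, log_inv, div_div, mul_comm (ℓ x)]
end

section
/- Let ℓ(x) = |x - c|^{-v(x)} with v C¹ and v(c) > 0. Then |x - c|^{ℓ(x)} · Dℓ(x) · log|x - c| → 0 as x → c. -/
open Real Filter Topology

/-! Write `t = |x - c|`, `L = log t` and `ℓ = t ^ (-v)`. Off `c` we have
`Dℓ = ℓ · (-v' L - v / (x - c))`, so with `M` bounding `|v|` and `|v'|` near `c` the expression is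
at most `t ^ ℓ · ℓ · M (|L| + 1/t) |L|`. Since `ℓ → ∞` while `ℓ ≤ t ^ (-M)`, eventually
`t ^ ℓ · ℓ ≤ t ^ (M + 2) · t ^ (-M) = t²`, and the bound becomes `M ((t L)² + |t L|) → 0`. -/

theorem hasDerivAt_abs_sub_rpow_neg {v : ℝ → ℝ} {v' c x : ℝ} (hv : HasDerivAt v v' x)
    (hx : x ≠ c) :
    HasDerivAt (fun y => |y - c| ^ (-v y))
      (|x - c| ^ (-v x) * (-v' * log |x - c| - v x / (x - c))) x := by
  have hexp : HasDerivAt (fun y => exp (log (y - c) * -v y))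
      (exp (log (x - c) * -v x) * (1 / (x - c) * -v x + log (x - c) * -v')) x :=
    (((hasDerivAt_id x).sub_const c).log (sub_ne_zero.2 hx)).mul hv.neg |>.exp
  have heq : (fun y => |y - c| ^ (-v y)) =ᶠ[𝓝 x] fun y => exp (log (y - c) * -v y) := by
    filter_upwards [eventually_ne_nhds hx] with y hy
    rw [rpow_def_of_pos (abs_pos.2 (sub_ne_zero.2 hy)), log_abs]
  rw [rpow_def_of_pos (abs_pos.2 (sub_ne_zero.2 hx)), log_abs]
  exact (hexp.congr_of_eventuallyEq heq).congr_deriv (by ring)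

theorem tendsto_abs_sub_rpow_neg_atTop {v : ℝ → ℝ} {c : ℝ} (hv : ContinuousAt v c)
    (hvc : 0 < v c) : Tendsto (fun x => |x - c| ^ (-v x)) (𝓝[≠] c) atTop := by
  have habs : Tendsto (fun x => |x - c|) (𝓝[≠] c) (𝓝[>] 0) := by
    simpa only [Real.norm_eq_abs] using tendsto_norm_sub_self_nhdsNE c
  have hexp : Tendsto (fun x => exp (log |x - c| * -v x)) (𝓝[≠] c) atTop :=
    tendsto_exp_atTop.comp <| (tendsto_log_nhdsGT_zero.comp habs).atBot_mul_neg
      (neg_neg_of_pos hvc) (hv.neg.tendsto.mono_left nhdsWithin_le_nhds)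
  refine hexp.congr' ?_
  filter_upwards [self_mem_nhdsWithin] with x hx
  rw [rpow_def_of_pos (abs_pos.2 (sub_ne_zero.2 hx))]

theorem rpow_mul_le_rpow_of_add_le {t s k n : ℝ} (ht₀ : 0 < t) (ht₁ : t ≤ 1) (hs₀ : 0 ≤ s)
    (hks : k + n ≤ s) (hsk : s ≤ t ^ (-k)) : t ^ s * s ≤ t ^ n :=
  calc t ^ s * s ≤ t ^ (k + n) * t ^ (-k) :=
        mul_le_mul (rpow_le_rpow_of_exponent_ge ht₀ ht₁ hks) hsk hs₀ (by positivity)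
    _ = t ^ n := by rw [← rpow_add ht₀, add_neg_cancel_comm]

theorem tendsto_sq_mul_log_add_abs_mul_log :
    Tendsto (fun t => (t * log t) ^ 2 + |t * log t|) (𝓝 0) (𝓝 0) := by
  have h : Tendsto (fun t => t * log t) (𝓝 0) (𝓝 0) := by
    simpa using continuous_mul_log.tendsto 0
  simpa using (h.pow 2).add h.abs

theorem abs_rpow_mul_deriv_mul_log_le {v : ℝ → ℝ} {c x M : ℝ} (hv : DifferentiableAt ℝ v x)
    (hx : x ≠ c) (hx₁ : |x - c| ≤ 1) (hvM : |v x| ≤ M) (hv'M : |deriv v x| ≤ M)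
    (hM : M + 2 ≤ |x - c| ^ (-v x)) :
    |(|x - c| ^ (|x - c| ^ (-v x)) * deriv (fun y => |y - c| ^ (-v y)) x * log |x - c|)|
      ≤ M * ((|x - c| * log |x - c|) ^ 2 + |(|x - c| * log |x - c|)|) := by
  have ht₀ : 0 < |x - c| := abs_pos.2 (sub_ne_zero.2 hx)
  rw [(hasDerivAt_abs_sub_rpow_neg hv.hasDerivAt hx).deriv]
  set t := |x - c| with ht
  set L := log t
  set s := t ^ (-v x)
  set B := -deriv v x * L - v x / (x - c)
  have hB : |B| ≤ M * (|L| + 1 / t) :=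
    calc |B| ≤ |deriv v x| * |L| + |v x| / t := by
          simpa [B, abs_mul, abs_div, ← ht] using abs_sub (-deriv v x * L) (v x / (x - c))
      _ ≤ M * (|L| + 1 / t) := by
          rw [mul_add, mul_one_div]
          gcongr
  have hs : t ^ s * s ≤ t ^ 2 := by
    have hsM : s ≤ t ^ (-M) :=
      rpow_le_rpow_of_exponent_ge ht₀ hx₁ (neg_le_neg ((le_abs_self _).trans hvM))
    exact_mod_cast rpow_mul_le_rpow_of_add_le ht₀ hx₁ (by positivity) hM hsM
  calc |t ^ s * (s * B) * L| = t ^ s * s * |B| * |L| := by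
        rw [abs_mul, abs_mul, abs_mul, abs_of_pos (by positivity), abs_of_nonneg (by positivity)]
        ring
    _ ≤ t ^ 2 * (M * (|L| + 1 / t)) * |L| := by gcongr
    _ = M * ((t * L) ^ 2 + |t * L|) := by
        rw [abs_mul, abs_of_pos ht₀, mul_pow, ← sq_abs L]
        field_simp

/-- For `ℓ(x) = |x-c|^{-v(x)}` with `v` C¹ and `v(c) > 0`,
`|x-c|^{ℓ(x)} · Dℓ(x) · log|x-c| → 0` as `x → c`. -/
theorem stmt2 (c : ℝ) (v : ℝ → ℝ) (hv : ContDiff ℝ 1 v) (hvc : 0 < v c)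
    (ℓ : ℝ → ℝ) (hℓ : ∀ x ≠ c, ℓ x = |x - c| ^ (-(v x))) :
    Tendsto (fun x => |x - c| ^ (ℓ x) * deriv ℓ x * Real.log |x - c|)
      (nhdsWithin c {c}ᶜ) (nhds 0) := by
  set M := max |v c| |deriv v c| + 1
  have hvM : ∀ᶠ x in 𝓝 c, |v x| ≤ M :=
    (hv.continuous.abs.tendsto c).eventually
      (eventually_le_nhds ((le_max_left _ _).trans_lt (lt_add_one _)))
  have hv'M : ∀ᶠ x in 𝓝 c, |deriv v x| ≤ M :=
    (hv.continuous_deriv_one.abs.tendsto c).eventually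
      (eventually_le_nhds ((le_max_right _ _).trans_lt (lt_add_one _)))
  have hclose : ∀ᶠ x in 𝓝 c, |x - c| ≤ 1 := by
    filter_upwards [Metric.closedBall_mem_nhds c one_pos] with x hx
    rwa [Metric.mem_closedBall, Real.dist_eq] at hx
  have hℓM : ∀ᶠ x in 𝓝[≠] c, M + 2 ≤ |x - c| ^ (-v x) :=
    (tendsto_abs_sub_rpow_neg_atTop hv.continuous.continuousAt hvc).eventually_ge_atTop _
  have hbound : Tendsto (fun x => M * ((|x - c| * log |x - c|) ^ 2 + |(|x - c| * log |x - c|)|))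
      (𝓝[≠] c) (𝓝 0) := by
    have habs : Tendsto (fun x => |x - c|) (𝓝 c) (𝓝 0) := by
      simpa only [Real.norm_eq_abs] using tendsto_norm_sub_self c
    simpa using ((tendsto_sq_mul_log_add_abs_mul_log.comp habs).const_mul M).mono_left
      nhdsWithin_le_nhds
  refine squeeze_zero_norm' ?_ hbound
  filter_upwards [self_mem_nhdsWithin, hℓM, nhdsWithin_le_nhds hvM, nhdsWithin_le_nhds hv'M,
    nhdsWithin_le_nhds hclose] with x hx hxM hvxM hv'xM hx₁
  have hℓf : ℓ =ᶠ[𝓝 x] fun y => |y - c| ^ (-v y) := (eventually_ne_nhds hx).mono hℓ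
  rw [Real.norm_eq_abs, hℓf.deriv_eq, hℓ x hx]
  exact abs_rpow_mul_deriv_mul_log_le ((hv.differentiable one_ne_zero).differentiableAt) hx hx₁
    hvxM hv'xM hxM
end

section
/- For the family f_b(x) = -2^{2^b} |x - 1/2|^{|x-1/2|^{-b}} + 1 (for x ≠ 1/2, f_b(1/2) = 1), the integral ∫₀¹ log|Df_b(x)| dx is finite (i.e. > -∞) if and only if b < 1. -/
/-!
Away from `x = 1/2`, with `u = |x - 1/2|` and `C = 2 ^ 2 ^ b`, we have `f_b = 1 - C u ^ u ^ (-b)`,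
hence `|Df_b| = C u ^ u ^ (-b) u ^ (-b - 1) (1 - b log u)` and
`log |Df_b| = u ^ (-b) log u + (log C - (b + 1) log u + log (1 - b log u))`.
The bracket is dominated by a multiple of `|log u|`, which is integrable near `0`.
On `(0, 1/2]` and for every `ε > 0`, `log 2 · u ^ (-b) ≤ |u ^ (-b) log u| ≤ ε⁻¹ u ^ (-b - ε)`,
so `u ^ (-b) log u` is integrable exactly when `u ^ (-b)` is, i.e. when `b < 1`.
-/

open Real MeasureTheory Set Filter Topology

theorem integrableOn_comp_abs_sub_iff {E : Type*} [NormedAddCommGroup E] {g : ℝ → E}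
    (c r : ℝ) :
    IntegrableOn (fun x => g |x - c|) (Icc (c - r) (c + r)) ↔ IntegrableOn g (Ioc 0 r) := by
  rcases lt_or_ge r 0 with hr | hr
  · simp [Icc_eq_empty (by linarith : ¬c - r ≤ c + r), Ioc_eq_empty (not_lt.2 hr.le)]
  have right : IntegrableOn (fun x => g |x - c|) (Ioc c (c + r)) ↔ IntegrableOn g (Ioc 0 r) := by
    rw [← (measurePreserving_sub_right volume c).integrableOn_comp_preimage
      (measurableEmbedding_subRight c) (f := g) (s := Ioc 0 r), preimage_sub_const_Ioc, zero_add,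
      add_comm r]
    refine integrableOn_congr_fun (fun x hx => ?_) measurableSet_Ioc
    simp [abs_of_pos (sub_pos.2 hx.1)]
  have left : IntegrableOn (fun x => g |x - c|) (Ico (c - r) c) ↔ IntegrableOn g (Ioc 0 r) := by
    rw [← (Measure.measurePreserving_sub_left volume c).integrableOn_comp_preimage
      (measurableEmbedding_subLeft c) (f := g) (s := Ioc 0 r), preimage_const_sub_Ioc, sub_zero]
    refine integrableOn_congr_fun (fun x hx => ?_) measurableSet_Ico
    simp [abs_of_neg (sub_neg.2 hx.2)]
  rw [← Ico_union_Icc_eq_Icc (b := c) (by linarith) (by linarith), integrableOn_union,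
    integrableOn_Icc_iff_integrableOn_Ioc, left, right, and_self]

theorem abs_deriv_eq_of_eq_comp_abs_sub {f φ : ℝ → ℝ} {c x φ' : ℝ}
    (hf : ∀ y ≠ c, f y = φ |y - c|) (hx : x ≠ c) (hφ : HasDerivAt φ φ' |x - c|) :
    |deriv f x| = |φ'| := by
  have hsub : x - c ≠ 0 := sub_ne_zero.2 hx
  have habs := (hasDerivAt_abs hsub).comp_sub_const x c
  rw [((hφ.comp x habs).congr_of_eventuallyEq ((eventually_ne_nhds hx).mono hf)).deriv, abs_mul]
  rcases hsub.lt_or_gt with h | h <;> simp [h]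

theorem hasDerivAt_rpow_self_rpow_neg (b : ℝ) {u : ℝ} (hu : 0 < u) :
    HasDerivAt (fun t => t ^ t ^ (-b)) (u ^ u ^ (-b) * (u ^ (-b - 1) * (1 - b * log u))) u := by
  convert (hasDerivAt_id' u).rpow ((hasDerivAt_id' u).rpow_const (p := -b) (Or.inl hu.ne')) hu
    using 1
  rw [rpow_sub_one hu.ne', rpow_sub_one hu.ne']
  field_simp
  ring

theorem log_rpow_self_rpow_neg_mul {b u : ℝ} (hu : 0 < u) (hQ : 0 < 1 - b * log u) :
    log (u ^ u ^ (-b) * (u ^ (-b - 1) * (1 - b * log u))) =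
      u ^ (-b) * log u + (-b - 1) * log u + log (1 - b * log u) := by
  rw [log_mul (by positivity) (by positivity), log_mul (by positivity) hQ.ne', log_rpow hu,
    log_rpow hu, add_assoc]

theorem integrableOn_log_one_sub_mul_log {b r : ℝ} (hb : 0 ≤ b) (hr : r ≤ 1) :
    IntegrableOn (fun u => log (1 - b * log u)) (Ioc 0 r) := by
  refine Integrable.mono'
    ((intervalIntegral.intervalIntegrable_log' (a := 0) (b := r)).1.norm.const_mul b)
    (by fun_prop : Measurable fun u => log (1 - b * log u)).aestronglyMeasurable ?_
  filter_upwards [ae_restrict_mem measurableSet_Ioc] with u hu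
  have hlog : log u ≤ 0 := log_nonpos hu.1.le (hu.2.trans hr)
  have hQ : 1 ≤ 1 - b * log u := by nlinarith
  rw [norm_eq_abs, abs_of_nonneg (log_nonneg hQ), norm_eq_abs, abs_of_nonpos hlog]
  linarith [log_le_sub_one_of_pos (by linarith : 0 < 1 - b * log u)]

theorem integrableOn_rpow_neg_mul_log_iff {b r : ℝ} (hr0 : 0 < r) (hr1 : r < 1) :
    IntegrableOn (fun u => u ^ (-b) * log u) (Ioc 0 r) ↔ b < 1 := by
  constructor
  · intro h
    by_contra! hb
    have hlogr : 0 < -log r := neg_pos.2 (log_neg hr0 hr1)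
    have hpow : IntegrableOn (fun u => u ^ (-b)) (Ioc 0 r) := by
      refine (h.norm.const_mul (-log r)⁻¹).mono'
        (by fun_prop : Measurable fun u : ℝ => u ^ (-b)).aestronglyMeasurable ?_
      filter_upwards [ae_restrict_mem measurableSet_Ioc] with u hu
      have hlog : -log r ≤ -log u := neg_le_neg (log_le_log hu.1 hu.2)
      have hp : 0 < u ^ (-b) := rpow_pos_of_pos hu.1 _
      rw [norm_eq_abs, abs_of_pos hp, norm_mul, norm_eq_abs, abs_of_pos hp, norm_eq_abs,
        abs_of_nonpos (by linarith), le_inv_mul_iff₀ hlogr]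
      nlinarith
    linarith [(intervalIntegral.integrableOn_Ioo_rpow_iff hr0).1
      (hpow.mono_set Ioo_subset_Ioc_self)]
  · intro hb
    set ε := (1 - b) / 2
    have hε : 0 < ε := by simp only [ε]; linarith
    have hpow : IntegrableOn (fun u => u ^ (-(b + ε))) (Ioc 0 r) := by
      rw [integrableOn_Ioc_iff_integrableOn_Ioo, intervalIntegral.integrableOn_Ioo_rpow_iff hr0]
      simp only [ε]; linarith
    refine (hpow.const_mul ε⁻¹).mono'
      (by fun_prop : Measurable fun u : ℝ => u ^ (-b) * log u).aestronglyMeasurable ?_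
    filter_upwards [ae_restrict_mem measurableSet_Ioc] with u hu
    have hlog := abs_log_mul_self_rpow_lt u ε hu.1 (hu.2.trans hr1.le) hε
    calc ‖u ^ (-b) * log u‖ = |log u * u ^ ε| * u ^ (-(b + ε)) := by
          rw [norm_mul, norm_eq_abs, norm_eq_abs, abs_mul, abs_of_pos (rpow_pos_of_pos hu.1 _),
            abs_of_pos (rpow_pos_of_pos hu.1 _), mul_assoc, ← rpow_add hu.1]
          ring_nf
      _ ≤ ε⁻¹ * u ^ (-(b + ε)) := by
          rw [← one_div]
          exact mul_le_mul_of_nonneg_right hlog.le (rpow_pos_of_pos hu.1 _).le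

theorem stmt4_general (b : ℝ) (hb : 0 < b) (f : ℝ → ℝ)
    (hf : ∀ x ≠ (1/2 : ℝ),
      f x = -(2:ℝ) ^ ((2:ℝ) ^ b) * |x - 1/2| ^ (|x - 1/2| ^ (-b)) + 1) :
    IntegrableOn (fun x => Real.log |deriv f x|) (Set.Icc (0:ℝ) 1) volume ↔ b < 1 := by
  set C := (2:ℝ) ^ ((2:ℝ) ^ b)
  have hC : 0 < C := by positivity
  let T : ℝ → ℝ := fun u => u ^ (-b) * log u
  let R : ℝ → ℝ := fun u => log C + (-b - 1) * log u + log (1 - b * log u)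
  have hae : (fun x => log |deriv f x|) =ᵐ[volume.restrict (Icc 0 1)]
      fun x => (T + R) |x - 1/2| := by
    filter_upwards [ae_restrict_mem measurableSet_Icc,
      ae_restrict_of_ae (Measure.ae_ne volume (1/2 : ℝ))] with x hI hx
    have hu : 0 < |x - 1/2| := abs_pos.2 (sub_ne_zero.2 hx)
    have hu1 : |x - 1/2| ≤ 1 := by rw [abs_le]; constructor <;> linarith [hI.1, hI.2]
    have hQ : 0 < 1 - b * log |x - 1/2| := by nlinarith [log_nonpos hu.le hu1]
    rw [abs_deriv_eq_of_eq_comp_abs_sub (φ := fun t => -C * t ^ t ^ (-b) + 1) hf hx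
      (((hasDerivAt_rpow_self_rpow_neg b hu).const_mul (-C)).add_const 1), neg_mul, abs_neg,
      abs_of_pos (by positivity), log_mul hC.ne' (by positivity), log_rpow_self_rpow_neg_mul hu hQ]
    simp only [T, R, Pi.add_apply]
    ring
  have hR : IntegrableOn R (Ioc 0 (1/2)) :=
    ((integrableOn_const measure_Ioc_lt_top.ne).add
      ((intervalIntegral.intervalIntegrable_log' (a := 0) (b := 1/2)).1.const_mul _)).add
      (integrableOn_log_one_sub_mul_log hb.le (by norm_num))
  rw [IntegrableOn, integrable_congr hae, ← IntegrableOn,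
    show Icc (0:ℝ) 1 = Icc (1/2 - 1/2) (1/2 + 1/2) by norm_num, integrableOn_comp_abs_sub_iff,
    IntegrableOn, integrable_add_iff_integrable_left hR, ← IntegrableOn]
  exact integrableOn_rpow_neg_mul_log_iff (by norm_num) (by norm_num)

/-- For the family `f_b(x) = -2^{2^b}|x-1/2|^{|x-1/2|^{-b}} + 1`, the integral
`∫₀¹ log|Df_b(x)| dx` is finite if and only if `b < 1`. -/
theorem stmt4 (b : ℝ) (hb : 0 < b) (f : ℝ → ℝ)
    (hf : ∀ x ≠ (1/2 : ℝ),
      f x = -(2:ℝ) ^ ((2:ℝ) ^ b) * |x - 1/2| ^ (|x - 1/2| ^ (-b)) + 1)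
    (hfc : f (1/2) = 1) :
    IntegrableOn (fun x => Real.log |deriv f x|) (Set.Icc (0:ℝ) 1) volume ↔ b < 1 :=
  stmt4_general b hb f hf
end
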